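/- arXiv:cs/0702132 — 2 statements merged into one kernel-verified Lean document; each statement's English description precedes it below -/
import Mathlib

section
/- Lower bound on the cellular interference at a femtocell via dominant interferers (Theorem 3, part 1): let A ⊂ ℝ² be measurable with 0 < area(A) < ∞, let λ > 0, and on a probability space let N be Poisson(λ·area(A)), let X₁, X₂, … be i.i.d. uniform on A, and let Ψ₁, Ψ₂, … be i.i.d. with Ψ_i = 10^(W_i/10) where W_i is Gaussian with mean 0 and variance 2σ², all mutually independent. Fix a femtocell location x₀ ∈ ℝ², a received power P_c > 0, and a path-loss exponent α > 0, and set I = ∑_{i=1}^{N} P_c Ψ_i (‖X_i‖/‖X_i − x₀‖)^α. Then for every y > 0, P(I ≥ y) ≥ 1 − exp(−λ ∫_A P(Ψ₁ ≥ (y/P_c)·(‖x − x₀‖/‖x‖)^α) dx). -/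
open MeasureTheory ProbabilityTheory Real Set

/-- The Euclidean plane `ℝ²`. -/
abbrev Plane : Type := EuclideanSpace ℝ (Fin 2)

/-- Index type for the random elements of the marked Poisson configuration:
`.inl i` indexes the `i`-th point `X i`, `.inr (.inl i)` the `i`-th shadowing variable `W i`,
and `.inr (.inr ())` the Poisson count `N`. -/
abbrev MarkedIdx : Type := ℕ ⊕ (ℕ ⊕ Unit)

/-- Codomain of each random element of the configuration. -/
def MarkedCod : MarkedIdx → Type
  | .inl _ => Plane
  | .inr (.inl _) => ℝ
  | .inr (.inr _) => ℕ

instance markedCodMeasurableSpace : ∀ j, MeasurableSpace (MarkedCod j)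
  | .inl _ => inferInstanceAs (MeasurableSpace Plane)
  | .inr (.inl _) => inferInstanceAs (MeasurableSpace ℝ)
  | .inr (.inr _) => inferInstanceAs (MeasurableSpace ℕ)

/-- The family of all random elements of the configuration, as a dependent function. -/
def markedFam {Ω : Type*} (X : ℕ → Ω → Plane) (W : ℕ → Ω → ℝ) (N : Ω → ℕ) :
    (j : MarkedIdx) → Ω → MarkedCod j
  | .inl i => X i
  | .inr (.inl i) => W i
  | .inr (.inr _) => N

set_option linter.unusedTactic false in
set_option linter.unreachableTactic false in
lemma marked_indep_prod {Ω : Type*} [MeasurableSpace Ω] (P : Measure Ω) [IsProbabilityMeasure P]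
    (N : Ω → ℕ) (X : ℕ → Ω → Plane) (W : ℕ → Ω → ℝ)
    (hNmeas : Measurable N) (hXmeas : ∀ i, Measurable (X i)) (hWmeas : ∀ i, Measurable (W i))
    (hindep : iIndepFun (markedFam X W N) P)
    (C : Set ℕ) (hC : MeasurableSet C) (B : Set (Plane × ℝ)) (hB : MeasurableSet B) (n : ℕ) :
    P ({ω | N ω ∈ C} ∩ ⋂ i ∈ Finset.range n, {ω | (X i ω, W i ω) ∈ B})
      = P {ω | N ω ∈ C} * ∏ i ∈ Finset.range n, P {ω | (X i ω, W i ω) ∈ B} := by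
  classical
  have hmeas : ∀ j, Measurable (markedFam X W N j) := by
    rintro (i | i | ⟨⟩)
    · exact hXmeas i
    · exact hWmeas i
    · exact hNmeas
  induction n with
  | zero => simp
  | succ n ih =>
    set S : Finset MarkedIdx :=
      insert (Sum.inr (Sum.inr ()))
        ((Finset.range n).image Sum.inl ∪ (Finset.range n).image (fun i => Sum.inr (Sum.inl i)))
      with hS
    set T : Finset MarkedIdx := {Sum.inl n, Sum.inr (Sum.inl n)} with hT
    have hST : Disjoint S T := by
      rw [Finset.disjoint_left]
      intro a ha haT
      simp only [hS, hT, Finset.mem_insert, Finset.mem_union, Finset.mem_image,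
        Finset.mem_range, Finset.mem_singleton] at ha haT
      rcases haT with rfl | rfl <;> rcases ha with h | h | h <;>
        simp_all <;> omega
    have hIF := hindep.indepFun_finset S T hST hmeas
    -- the sets
    have hNmem : (Sum.inr (Sum.inr ()) : MarkedIdx) ∈ S := by simp [hS]
    have hXmem : ∀ i, i ∈ Finset.range n → (Sum.inl i : MarkedIdx) ∈ S := fun i hi =>
      Finset.mem_insert_of_mem (Finset.mem_union_left _ (Finset.mem_image_of_mem _ hi))
    have hWmem : ∀ i, i ∈ Finset.range n → (Sum.inr (Sum.inl i) : MarkedIdx) ∈ S := fun i hi =>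
      Finset.mem_insert_of_mem (Finset.mem_union_right _ (Finset.mem_image_of_mem _ hi))
    set s : Set ((j : S) → MarkedCod j) :=
      {v | (v ⟨Sum.inr (Sum.inr ()), hNmem⟩ : ℕ) ∈ C} ∩
        ⋂ (i : ℕ), ⋂ (hi : i ∈ Finset.range n),
          {v | ((v ⟨Sum.inl i, hXmem i hi⟩ : Plane), (v ⟨Sum.inr (Sum.inl i), hWmem i hi⟩ : ℝ)) ∈ B}
      with hs
    set t : Set ((j : T) → MarkedCod j) :=
      {v | ((v ⟨Sum.inl n, by simp [hT]⟩ : Plane),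
            (v ⟨Sum.inr (Sum.inl n), by simp [hT]⟩ : ℝ)) ∈ B} with ht
    have hsmeas : MeasurableSet s := by
      apply MeasurableSet.inter
      · exact measurable_pi_apply _ hC
      · exact MeasurableSet.iInter fun i => MeasurableSet.iInter fun hi =>
          ((measurable_pi_apply _).prodMk (measurable_pi_apply _)) hB
    have htmeas : MeasurableSet t :=
      ((measurable_pi_apply _).prodMk (measurable_pi_apply _)) hB
    have key := hIF.measure_inter_preimage_eq_mul s t hsmeas htmeas
    have hpre_s : (fun a (i : S) => markedFam X W N i a) ⁻¹' s
        = {ω | N ω ∈ C} ∩ ⋂ i ∈ Finset.range n, {ω | (X i ω, W i ω) ∈ B} := by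
      ext ω
      simp only [hs, Set.mem_preimage, Set.mem_inter_iff, Set.mem_iInter, Set.mem_setOf_eq]
      rfl
    have hpre_t : (fun a (i : T) => markedFam X W N i a) ⁻¹' t
        = {ω | (X n ω, W n ω) ∈ B} := by
      ext ω
      simp only [ht, Set.mem_preimage, Set.mem_setOf_eq]
      rfl
    rw [hpre_s, hpre_t] at key
    have hset : {ω | N ω ∈ C} ∩ ⋂ i ∈ Finset.range (n + 1), {ω | (X i ω, W i ω) ∈ B}
        = ({ω | N ω ∈ C} ∩ ⋂ i ∈ Finset.range n, {ω | (X i ω, W i ω) ∈ B})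
          ∩ {ω | (X n ω, W n ω) ∈ B} := by
      ext ω
      simp only [Set.mem_inter_iff, Set.mem_iInter, Set.mem_setOf_eq, Finset.mem_range]
      constructor
      · rintro ⟨h1, h2⟩
        exact ⟨⟨h1, fun i hi => h2 i (by omega)⟩, h2 n (by omega)⟩
      · rintro ⟨⟨h1, h2⟩, h3⟩
        refine ⟨h1, fun i hi => ?_⟩
        rcases Nat.lt_succ_iff_lt_or_eq.mp hi with hi | rfl
        · exact h2 i hi
        · exact h3
    rw [hset, key, ih, Finset.range_add_one, Finset.prod_insert (by simp)]
    ring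

lemma marked_pair_law {Ω : Type*} [MeasurableSpace Ω] (P : Measure Ω) [IsProbabilityMeasure P]
    (N : Ω → ℕ) (X : ℕ → Ω → Plane) (W : ℕ → Ω → ℝ)
    (hXmeas : ∀ i, Measurable (X i)) (hWmeas : ∀ i, Measurable (W i))
    (hindep : iIndepFun (markedFam X W N) P)
    (μ1 : Measure Plane) (μ2 : Measure ℝ) [SigmaFinite μ1] [SigmaFinite μ2] (i : ℕ)
    (hX : Measure.map (X i) P = μ1) (hW : Measure.map (W i) P = μ2)
    (B : Set (Plane × ℝ)) (hB : MeasurableSet B) :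
    P {ω | (X i ω, W i ω) ∈ B} = μ1.prod μ2 B := by
  have hind : IndepFun (X i) (W i) P :=
    hindep.indepFun (i := Sum.inl i) (j := Sum.inr (Sum.inl i)) (by simp)
  rw [indepFun_iff_map_prod_eq_prod_map_map (hXmeas i).aemeasurable (hWmeas i).aemeasurable]
    at hind
  have : P {ω | (X i ω, W i ω) ∈ B} = Measure.map (fun ω => (X i ω, W i ω)) P B := by
    rw [Measure.map_apply ((hXmeas i).prodMk (hWmeas i)) hB]; rfl
  rw [this, hind, hX, hW]

lemma dominant_event_equiv {Pc α y : ℝ} (hPc : 0 < Pc) (x₀ x : Plane)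
    (hx0 : x ≠ 0) (hxx0 : x ≠ x₀) (ψ : ℝ) :
    y ≤ Pc * ψ * (‖x‖ / ‖x - x₀‖) ^ α ↔ (y / Pc) * (‖x - x₀‖ / ‖x‖) ^ α ≤ ψ := by
  have hb : (0:ℝ) < ‖x‖ := norm_pos_iff.mpr hx0
  have hc : (0:ℝ) < ‖x - x₀‖ := by
    rw [norm_pos_iff]; exact sub_ne_zero.mpr hxx0
  have hr : (0:ℝ) < (‖x‖ / ‖x - x₀‖) ^ α := rpow_pos_of_pos (div_pos hb hc) α
  have hinv : (‖x - x₀‖ / ‖x‖) ^ α = ((‖x‖ / ‖x - x₀‖) ^ α)⁻¹ := by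
    rw [← Real.inv_rpow (div_pos hb hc).le, inv_div]
  rw [hinv, div_mul_eq_mul_div, div_le_iff₀ hPc]
  generalize (‖x‖ / ‖x - x₀‖) ^ α = r at hr ⊢
  rw [mul_inv_le_iff₀ hr]
  constructor <;> intro h <;> nlinarith

lemma tsum_exp_aux (x : ℝ) : ∑' n : ℕ, x ^ n / n.factorial = Real.exp x := by
  rw [Real.exp_eq_exp_ℝ, NormedSpace.exp_eq_tsum_div]

set_option maxHeartbeats 1000000 in
/-- **Theorem 3, part 1: dominant-interferer lower bound.**
`A ⊂ ℝ²` measurable with `0 < area(A) < ∞`, `N` Poisson(`λ·area(A)`), `X_i` i.i.d. uniform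
on `A`, `Ψ_i = 10^(W_i/10)` with `W_i` i.i.d. Gaussian `N(0, 2σ²)`, all mutually independent.
With `I = ∑_{i<N} P_c Ψ_i (‖X_i‖/‖X_i − x₀‖)^α`, for every `y > 0`,
`P(I ≥ y) ≥ 1 − exp(−λ ∫_A P(Ψ₁ ≥ (y/P_c)(‖x − x₀‖/‖x‖)^α) dx)`. -/
theorem ccdf_cellular_interference_lower_bound
    {Ω : Type*} [MeasurableSpace Ω] (P : Measure Ω) [IsProbabilityMeasure P]
    (A : Set Plane) (hAmeas : MeasurableSet A)
    (hA0 : 0 < volume A) (hAfin : volume A < ⊤)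
    (lam : ℝ) (hlam : 0 < lam)
    (N : Ω → ℕ) (X : ℕ → Ω → Plane) (W : ℕ → Ω → ℝ) (σ : NNReal)
    (hNmeas : Measurable N) (hXmeas : ∀ i, Measurable (X i)) (hWmeas : ∀ i, Measurable (W i))
    (hN : ∀ n : ℕ, P {ω | N ω = n}
      = ENNReal.ofReal (Real.exp (-(lam * (volume A).toReal))
          * (lam * (volume A).toReal) ^ n / n.factorial))
    (hX : ∀ i, Measure.map (X i) P = (volume A)⁻¹ • volume.restrict A)
    (hW : ∀ i, Measure.map (W i) P = gaussianReal 0 (2 * σ ^ 2))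
    (hindep : iIndepFun (markedFam X W N) P)
    (x₀ : Plane) (Pc : ℝ) (hPc : 0 < Pc) (α : ℝ) (hα : 0 < α) (y : ℝ) (hy : 0 < y) :
    ENNReal.ofReal (1 - Real.exp (-(lam * ∫ x in A,
        (P {ω | (y / Pc) * (‖x - x₀‖ / ‖x‖) ^ α ≤ (10 : ℝ) ^ (W 0 ω / 10)}).toReal)))
      ≤ P {ω | y ≤ ∑ i ∈ Finset.range (N ω),
            Pc * (10 : ℝ) ^ (W i ω / 10) * (‖X i ω‖ / ‖X i ω - x₀‖) ^ α} := by
  classical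
  -- measures
  set γ : Measure ℝ := gaussianReal 0 (2 * σ ^ 2) with hγ
  set μA : Measure Plane := (volume A)⁻¹ • volume.restrict A with hμA
  haveI hμAprob : IsProbabilityMeasure μA := by
    constructor
    rw [hμA, Measure.smul_apply, Measure.restrict_apply_univ, smul_eq_mul,
      ENNReal.inv_mul_cancel hA0.ne' hAfin.ne]
  set ν : Measure (Plane × ℝ) := μA.prod γ with hν
  haveI : IsProbabilityMeasure ν := by rw [hν]; infer_instance
  -- basic measurability
  have hψcont : Continuous fun w : ℝ => (10 : ℝ) ^ (w / 10) :=
    Continuous.rpow continuous_const (continuous_id.div_const 10) fun _ => Or.inl (by norm_num)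
  have hratio : Measurable fun p : Plane × ℝ => (‖p.1‖ / ‖p.1 - x₀‖) ^ α :=
    ((Real.continuous_rpow_const hα.le).measurable).comp
      (measurable_fst.norm.div ((measurable_fst.sub measurable_const).norm))
  have htermP : Measurable fun p : Plane × ℝ => Pc * (10 : ℝ) ^ (p.2 / 10)
      * (‖p.1‖ / ‖p.1 - x₀‖) ^ α :=
    (measurable_const.mul (hψcont.measurable.comp measurable_snd)).mul hratio
  set B' : Set (Plane × ℝ) :=
    {p | y ≤ Pc * (10 : ℝ) ^ (p.2 / 10) * (‖p.1‖ / ‖p.1 - x₀‖) ^ α} with hB'def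
  have hB' : MeasurableSet B' := measurableSet_le measurable_const htermP
  -- per-pair law
  have hpair : ∀ (i : ℕ) (B : Set (Plane × ℝ)), MeasurableSet B →
      P {ω | (X i ω, W i ω) ∈ B} = ν B := fun i B hB =>
    marked_pair_law P N X W hXmeas hWmeas hindep μA γ i (hX i) (hW i) B hB
  -- the per-point dominant probability
  set q : ℝ := (ν B').toReal with hqdef
  have hq0 : 0 ≤ q := ENNReal.toReal_nonneg
  have hq1 : q ≤ 1 := by
    rw [hqdef]
    exact ENNReal.toReal_le_of_le_ofReal one_pos.le (by simpa using prob_le_one (μ := ν) (s := B'))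
  have hνB' : ν B' = ENNReal.ofReal q := (ENNReal.ofReal_toReal (measure_ne_top ν B')).symm
  have hνB'c : ν B'ᶜ = ENNReal.ofReal (1 - q) := by
    rw [prob_compl_eq_one_sub hB', hνB', ENNReal.ofReal_sub _ hq0, ENNReal.ofReal_one]
  -- the integral equals (volume A).toReal * q
  set F : Plane → ENNReal :=
    fun x => γ {w : ℝ | (y / Pc) * (‖x - x₀‖ / ‖x‖) ^ α ≤ (10 : ℝ) ^ (w / 10)} with hFdef
  have hFeq : ∀ x : Plane,
      (P {ω | (y / Pc) * (‖x - x₀‖ / ‖x‖) ^ α ≤ (10 : ℝ) ^ (W 0 ω / 10)}).toReal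
        = (F x).toReal := by
    intro x
    have hset : MeasurableSet {w : ℝ | (y / Pc) * (‖x - x₀‖ / ‖x‖) ^ α ≤ (10 : ℝ) ^ (w / 10)} :=
      measurableSet_le measurable_const hψcont.measurable
    have : P {ω | (y / Pc) * (‖x - x₀‖ / ‖x‖) ^ α ≤ (10 : ℝ) ^ (W 0 ω / 10)}
        = Measure.map (W 0) P {w : ℝ | (y / Pc) * (‖x - x₀‖ / ‖x‖) ^ α ≤ (10 : ℝ) ^ (w / 10)} := by
      rw [Measure.map_apply (hWmeas 0) hset]; rfl
    rw [this, hW 0, hFdef]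
  have hFmeas : Measurable F := by
    have hB2 : MeasurableSet {p : Plane × ℝ |
        (y / Pc) * (‖p.1 - x₀‖ / ‖p.1‖) ^ α ≤ (10 : ℝ) ^ (p.2 / 10)} := by
      apply measurableSet_le
      · exact measurable_const.mul (((Real.continuous_rpow_const hα.le).measurable).comp
          (((measurable_fst.sub measurable_const).norm).div measurable_fst.norm))
      · exact hψcont.measurable.comp measurable_snd
    exact measurable_measure_prodMk_left hB2
  have hnull : volume ({0, x₀} : Set Plane) = 0 :=
    measure_union_null (measure_singleton _) (measure_singleton _)
  have hae : ∀ᵐ x ∂(volume.restrict A), γ (Prod.mk x ⁻¹' B') = F x := by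
    refine ae_restrict_of_ae ?_
    have : ∀ᵐ x ∂(volume : Measure Plane), x ∉ ({0, x₀} : Set Plane) :=
      measure_eq_zero_iff_ae_notMem.mp hnull
    filter_upwards [this] with x hx
    simp only [Set.mem_insert_iff, Set.mem_singleton_iff, not_or] at hx
    congr 1
    ext w
    simp only [Set.mem_preimage, hB'def, Set.mem_setOf_eq]
    exact dominant_event_equiv hPc x₀ x hx.1 hx.2 _
  have hprodB' : ν B' = (volume A)⁻¹ * ∫⁻ x in A, F x := by
    rw [hν, Measure.prod_apply hB', hμA, lintegral_smul_measure]
    congr 1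
    exact lintegral_congr_ae hae
  have hL : ∫⁻ x in A, F x = volume A * ν B' := by
    rw [hprodB', ← mul_assoc, ENNReal.mul_inv_cancel hA0.ne' hAfin.ne, one_mul]
  have hIeq : (∫ x in A, (P {ω | (y / Pc) * (‖x - x₀‖ / ‖x‖) ^ α
      ≤ (10 : ℝ) ^ (W 0 ω / 10)}).toReal) = (volume A).toReal * q := by
    have h1 : (∫ x in A, (P {ω | (y / Pc) * (‖x - x₀‖ / ‖x‖) ^ α
        ≤ (10 : ℝ) ^ (W 0 ω / 10)}).toReal) = ∫ x in A, (F x).toReal := by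
      exact integral_congr_ae (Filter.Eventually.of_forall hFeq)
    rw [h1, integral_toReal (hFmeas.aemeasurable)
      (Filter.Eventually.of_forall fun x => measure_lt_top γ _), hL,
      ENNReal.toReal_mul, hqdef]
  -- the big event
  set term : ℕ → Ω → ℝ := fun i ω =>
    Pc * (10 : ℝ) ^ (W i ω / 10) * (‖X i ω‖ / ‖X i ω - x₀‖) ^ α with hterm
  have htermmeas : ∀ i, Measurable (term i) := by
    intro i
    simp only [hterm]
    exact (measurable_const.mul (hψcont.measurable.comp (hWmeas i))).mul
      (((Real.continuous_rpow_const hα.le).measurable).comp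
        ((hXmeas i).norm.div (((hXmeas i).sub measurable_const).norm)))
  have htermnonneg : ∀ i ω, 0 ≤ term i ω := by
    intro i ω
    have : (0:ℝ) < (10 : ℝ) ^ (W i ω / 10) := rpow_pos_of_pos (by norm_num) _
    have h2 : (0:ℝ) ≤ (‖X i ω‖ / ‖X i ω - x₀‖) ^ α :=
      rpow_nonneg (div_nonneg (norm_nonneg _) (norm_nonneg _)) _
    positivity
  set Sev : Set Ω := {ω | y ≤ ∑ i ∈ Finset.range (N ω), term i ω} with hSev
  have hSmeas : MeasurableSet Sev := by
    have : Sev = ⋃ n, ({ω | N ω = n} ∩ {ω | y ≤ ∑ i ∈ Finset.range n, term i ω}) := by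
      ext ω
      simp only [hSev, Set.mem_iUnion, Set.mem_inter_iff, Set.mem_setOf_eq]
      exact ⟨fun h => ⟨N ω, rfl, h⟩, fun ⟨n, hn, h⟩ => hn ▸ h⟩
    rw [this]
    exact MeasurableSet.iUnion fun n =>
      (hNmeas (measurableSet_singleton n)).inter
        (measurableSet_le measurable_const (Finset.measurable_sum _ fun i _ => htermmeas i))
  -- complement is contained in "no dominant interferer"
  have hsubset : Sevᶜ ⊆ ⋃ n, ({ω | N ω ∈ ({n} : Set ℕ)}
      ∩ ⋂ i ∈ Finset.range n, {ω | (X i ω, W i ω) ∈ B'ᶜ}) := by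
    intro ω hω
    simp only [hSev, Set.mem_compl_iff, Set.mem_setOf_eq, not_le] at hω
    refine Set.mem_iUnion.mpr ⟨N ω, ⟨rfl, ?_⟩⟩
    refine Set.mem_iInter.mpr fun i => Set.mem_iInter.mpr fun hi => ?_
    simp only [Set.mem_setOf_eq, Set.mem_compl_iff, hB'def, Set.mem_setOf_eq, not_le]
    calc term i ω ≤ ∑ j ∈ Finset.range (N ω), term j ω :=
          Finset.single_le_sum (fun j _ => htermnonneg j ω) hi
      _ < y := hω
  -- bound the complement probability
  set a : ℝ := (volume A).toReal with hadef
  have ha0 : 0 < a := ENNReal.toReal_pos hA0.ne' hAfin.ne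
  set μ0 : ℝ := lam * a with hμ0
  have hμ0pos : 0 < μ0 := mul_pos hlam ha0
  have hpartial : ∀ n : ℕ, P ({ω | N ω ∈ ({n} : Set ℕ)}
      ∩ ⋂ i ∈ Finset.range n, {ω | (X i ω, W i ω) ∈ B'ᶜ})
      = ENNReal.ofReal (Real.exp (-μ0) * (μ0 * (1 - q)) ^ n / n.factorial) := by
    intro n
    rw [marked_indep_prod P N X W hNmeas hXmeas hWmeas hindep _ (measurableSet_singleton n)
      _ hB'.compl n]
    have hNset : {ω | N ω ∈ ({n} : Set ℕ)} = {ω | N ω = n} := by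
      ext ω; simp
    rw [hNset, hN n]
    have hprod : ∏ i ∈ Finset.range n, P {ω | (X i ω, W i ω) ∈ B'ᶜ}
        = ENNReal.ofReal ((1 - q) ^ n) := by
      rw [Finset.prod_congr rfl fun i _ => (hpair i _ hB'.compl).trans hνB'c,
        Finset.prod_const, Finset.card_range, ← ENNReal.ofReal_pow (by linarith)]
    rw [hprod, ← ENNReal.ofReal_mul (by positivity)]
    congr 1
    have hreal : ∀ r s t : ℝ, Real.exp t * r ^ n / n.factorial * s ^ n
        = Real.exp t * (r * s) ^ n / n.factorial := fun r s t => by rw [mul_pow]; ring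
    exact hreal μ0 (1 - q) (-μ0)
  have hcomplbound : P Sevᶜ ≤ ENNReal.ofReal (Real.exp (-(μ0 * q))) := by
    calc P Sevᶜ ≤ P (⋃ n, ({ω | N ω ∈ ({n} : Set ℕ)}
          ∩ ⋂ i ∈ Finset.range n, {ω | (X i ω, W i ω) ∈ B'ᶜ})) := measure_mono hsubset
      _ ≤ ∑' n, P ({ω | N ω ∈ ({n} : Set ℕ)}
          ∩ ⋂ i ∈ Finset.range n, {ω | (X i ω, W i ω) ∈ B'ᶜ}) := measure_iUnion_le _
      _ = ∑' n, ENNReal.ofReal (Real.exp (-μ0) * (μ0 * (1 - q)) ^ n / n.factorial) := by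
          exact tsum_congr hpartial
      _ = ENNReal.ofReal (∑' n, Real.exp (-μ0) * (μ0 * (1 - q)) ^ n / n.factorial) := by
          have hbase : 0 ≤ μ0 * (1 - q) := mul_nonneg hμ0pos.le (by linarith)
          rw [ENNReal.ofReal_tsum_of_nonneg (fun n => div_nonneg
            (mul_nonneg (Real.exp_nonneg _) (pow_nonneg hbase n)) (Nat.cast_nonneg _))]
          exact ((Real.summable_pow_div_factorial (μ0 * (1 - q))).mul_left
            (Real.exp (-μ0))).congr (fun n => by ring)
      _ = ENNReal.ofReal (Real.exp (-(μ0 * q))) := by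
          congr 1
          have : ∀ n : ℕ, Real.exp (-μ0) * (μ0 * (1 - q)) ^ n / n.factorial
              = Real.exp (-μ0) * ((μ0 * (1 - q)) ^ n / n.factorial) := fun n => by ring
          rw [tsum_congr this, tsum_mul_left, tsum_exp_aux, ← Real.exp_add]
          ring_nf
  -- conclude
  have hgoalarg : lam * (∫ x in A, (P {ω | (y / Pc) * (‖x - x₀‖ / ‖x‖) ^ α
      ≤ (10 : ℝ) ^ (W 0 ω / 10)}).toReal) = μ0 * q := by
    rw [hIeq, hμ0, hadef]; ring
  rw [hgoalarg]
  rw [ENNReal.ofReal_sub _ (Real.exp_nonneg _), ENNReal.ofReal_one]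
  calc (1 : ENNReal) - ENNReal.ofReal (Real.exp (-(μ0 * q)))
      ≤ 1 - P Sevᶜ := tsub_le_tsub_left hcomplbound 1
    _ = P Sev := by
        rw [prob_compl_eq_one_sub hSmeas, ENNReal.sub_sub_cancel ENNReal.one_ne_top prob_le_one]
end

section
/- Exclusion-region integral identity (core of Lemma 2): let ν be a probability measure on (0,∞), let α > 2, δ = 2/α, Q, y > 0, and R ≥ 0, and suppose ∫ ψ^δ dν(ψ) < ∞. Set u = (y/Q)·R^α. Then ∫_{{x ∈ ℝ² : ‖x‖ ≥ R}} ν{ψ : Q ψ ‖x‖^(−α) > y} dx = π [ (Q/y)^δ ∫_{(u,∞)} ψ^δ dν(ψ) − ν((u,∞))·R² ]. -/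
open MeasureTheory Real Set
open scoped ENNReal
lemma plane_volume_ball (r : ℝ) (hr : 0 ≤ r) :
    volume (Metric.ball (0 : Plane) r) = ENNReal.ofReal (π * r ^ 2) := by
  rw [EuclideanSpace.volume_ball]
  simp only [Fintype.card_fin]
  have h1 : ((2:ℕ):ℝ) / 2 + 1 = 2 := by norm_num
  rw [h1, Real.Gamma_two, Real.sq_sqrt Real.pi_nonneg, div_one,
    ← ENNReal.ofReal_pow hr, ← ENNReal.ofReal_mul (by positivity), mul_comm]

lemma plane_volume_annulus (R r : ℝ) (hR : 0 ≤ R) (hr : 0 ≤ r) :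
    volume {x : Plane | R ≤ ‖x‖ ∧ ‖x‖ < r} = ENNReal.ofReal (π * (r ^ 2 - R ^ 2)) := by
  rcases le_or_gt r R with h | h
  · have he : {x : Plane | R ≤ ‖x‖ ∧ ‖x‖ < r} = ∅ := by
      ext x; simp only [mem_setOf_eq, mem_empty_iff_false, iff_false, not_and, not_lt]
      intro h1; linarith
    rw [he, measure_empty]
    symm; rw [ENNReal.ofReal_eq_zero]
    have : r ^ 2 ≤ R ^ 2 := by nlinarith
    nlinarith [Real.pi_pos]
  · have hset : {x : Plane | R ≤ ‖x‖ ∧ ‖x‖ < r} = Metric.ball 0 r \ Metric.ball 0 R := by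
      ext x
      simp only [mem_setOf_eq, mem_diff, Metric.mem_ball, dist_zero_right, not_lt]
      tauto
    rw [hset, measure_diff (Metric.ball_subset_ball h.le)
      measurableSet_ball.nullMeasurableSet measure_ball_lt_top.ne,
      plane_volume_ball _ hr, plane_volume_ball _ hR,
      ← ENNReal.ofReal_sub _ (by positivity)]
    ring_nf

/-- **exclusion-region integral identity, core of Lemma 2.**
Let `ν` be a probability measure on `(0,∞)`, `α > 2`, `δ = 2/α`, `Q, y > 0`, `R ≥ 0`,
with `∫ ψ^δ dν < ∞`, and set `u = (y/Q)·R^α`. Then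
`∫_{‖x‖ ≥ R} ν{ψ : Q ψ ‖x‖^(−α) > y} dx
  = π [ (Q/y)^δ ∫_{(u,∞)} ψ^δ dν − ν((u,∞))·R² ]`. -/
theorem exclusion_region_integral
    (ν : Measure ℝ) [IsProbabilityMeasure ν] (hν : ν (Set.Iic 0) = 0)
    (α δ Q y R : ℝ) (hα : 2 < α) (hδ : δ = 2 / α) (hQ : 0 < Q) (hy : 0 < y) (hR : 0 ≤ R)
    (hint : Integrable (fun ψ : ℝ => ψ ^ δ) ν) :
    ∫ x in {x : Plane | R ≤ ‖x‖}, (ν {ψ : ℝ | y < Q * ψ * ‖x‖ ^ (-α)}).toReal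
      = π * ((Q / y) ^ δ * (∫ ψ in Set.Ioi ((y / Q) * R ^ α), ψ ^ δ ∂ν)
          - (ν (Set.Ioi ((y / Q) * R ^ α))).toReal * R ^ 2) := by
  have hαpos : (0:ℝ) < α := by linarith
  have hδpos : 0 < δ := by rw [hδ]; positivity
  set c : ℝ := y / Q with hc
  have hcpos : 0 < c := by positivity
  set u : ℝ := c * R ^ α with hu
  have hupos : 0 ≤ u := by
    have := Real.rpow_nonneg hR α; positivity
  set S : Set Plane := {x : Plane | R ≤ ‖x‖} with hS
  have hSm : MeasurableSet S := measurableSet_le measurable_const measurable_norm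
  -- the key function
  set g : Plane → ℝ≥0∞ := fun x => ν (Set.Ioi (c * ‖x‖ ^ α)) with hg
  have hgm : Measurable g := by
    have h1 : Measurable fun t : ℝ => ν (Set.Ioi t) :=
      Antitone.measurable (fun a b hab => measure_mono (Set.Ioi_subset_Ioi hab))
    exact h1.comp (((continuous_norm.rpow_const fun x => Or.inr hαpos.le).measurable).const_mul c)
  -- Step 1: replace the set by Ioi, a.e.
  have step1 : ∫ x in S, (ν {ψ : ℝ | y < Q * ψ * ‖x‖ ^ (-α)}).toReal ∂volume
      = ∫ x in S, (g x).toReal ∂volume := by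
    refine integral_congr_ae (ae_restrict_of_ae ?_)
    have hz : (volume : Measure Plane) {(0 : Plane)} = 0 := measure_singleton 0
    filter_upwards [compl_mem_ae_iff.2 hz] with x hx
    have hxn : 0 < ‖x‖ := norm_pos_iff.2 (by simpa using hx)
    have hset : {ψ : ℝ | y < Q * ψ * ‖x‖ ^ (-α)} = Set.Ioi (c * ‖x‖ ^ α) := by
      ext ψ
      have ht : 0 < ‖x‖ ^ α := Real.rpow_pos_of_pos hxn α
      simp only [mem_setOf_eq, mem_Ioi]
      rw [Real.rpow_neg (norm_nonneg x), ← div_eq_mul_inv, lt_div_iff₀ ht, hc,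
        div_mul_eq_mul_div, div_lt_iff₀ hQ]
      constructor <;> intro h <;> nlinarith
    rw [hset]
  rw [step1]
  -- Step 2: Bochner to lintegral
  have step2 : ∫ x in S, (g x).toReal ∂volume = (∫⁻ x in S, g x ∂volume).toReal := by
    refine integral_toReal hgm.aemeasurable ?_
    exact Filter.Eventually.of_forall fun x => measure_lt_top ν _
  rw [step2]
  -- Step 3: Tonelli
  set P : Set (Plane × ℝ) := {p | c * ‖p.1‖ ^ α < p.2} with hP
  have hPm : MeasurableSet P := by
    apply measurableSet_lt
    · exact (continuous_const.mul ((continuous_norm.comp continuous_fst).rpow_const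
        fun x => Or.inr hαpos.le)).measurable
    · exact measurable_snd
  set A : ℝ → Set Plane := fun ψ => {x : Plane | c * ‖x‖ ^ α < ψ} with hA
  have hAm : ∀ ψ, MeasurableSet (A ψ) := fun ψ => by
    apply measurableSet_lt
    · exact (continuous_const.mul
        (continuous_norm.rpow_const fun x => Or.inr hαpos.le)).measurable
    · exact measurable_const
  have step3 : ∫⁻ x in S, g x ∂volume = ∫⁻ ψ, volume (A ψ ∩ S) ∂ν := by
    have h1 : ∀ x : Plane, g x = ∫⁻ ψ, P.indicator (1 : Plane × ℝ → ℝ≥0∞) (x, ψ) ∂ν := by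
      intro x
      show ν (Set.Ioi (c * ‖x‖ ^ α)) = _
      rw [← lintegral_indicator_one (measurableSet_Ioi (a := c * ‖x‖ ^ α))]
      refine lintegral_congr fun ψ => ?_
      simp only [Set.indicator_apply, hP, mem_setOf_eq, mem_Ioi, Pi.one_apply]
    have h2 : AEMeasurable (Function.uncurry fun (x : Plane) (ψ : ℝ) => P.indicator (1 : Plane × ℝ → ℝ≥0∞) (x, ψ))
        ((volume.restrict S).prod ν) := by
      have hm : Measurable (P.indicator (1 : Plane × ℝ → ℝ≥0∞)) :=
        measurable_const.indicator hPm
      exact hm.aemeasurable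
    calc ∫⁻ x in S, g x ∂volume
        = ∫⁻ x in S, ∫⁻ ψ, P.indicator (1 : Plane × ℝ → ℝ≥0∞) (x, ψ) ∂ν ∂volume := by
          exact lintegral_congr fun x => h1 x
      _ = ∫⁻ ψ, ∫⁻ x in S, P.indicator (1 : Plane × ℝ → ℝ≥0∞) (x, ψ) ∂volume ∂ν :=
          lintegral_lintegral_swap h2
      _ = ∫⁻ ψ, volume (A ψ ∩ S) ∂ν := by
          refine lintegral_congr fun ψ => ?_
          have : (fun x : Plane => P.indicator (1 : Plane × ℝ → ℝ≥0∞) (x, ψ)) = (A ψ).indicator 1 := by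
            funext x
            simp only [Set.indicator_apply, hP, hA, mem_setOf_eq, Pi.one_apply]
          rw [this, lintegral_indicator_one (hAm ψ), Measure.restrict_apply (hAm ψ)]
  rw [step3]
  have hQy : Q / y * c = 1 := by rw [hc]; field_simp
  have h2R : (R ^ α) ^ δ = R ^ 2 := by
    rw [← Real.rpow_mul hR]
    have : α * δ = 2 := by rw [hδ]; field_simp
    rw [this, show (2:ℝ) = ((2:ℕ):ℝ) by norm_num, Real.rpow_natCast]
  -- Step 4: compute volumes
  have hmem : ∀ᵐ ψ ∂ν, ψ ∈ Set.Ioi (0:ℝ) := by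
    rw [Filter.eventually_iff, mem_ae_iff]
    have hcompl : {ψ : ℝ | ψ ∈ Set.Ioi (0:ℝ)}ᶜ = Set.Iic 0 := by
      ext ψ; simp
    rw [hcompl]; exact hν
  have step4 : ∫⁻ ψ, volume (A ψ ∩ S) ∂ν
      = ∫⁻ ψ in Set.Ioi (0:ℝ), ENNReal.ofReal (π * ((Q / y) ^ δ * ψ ^ δ - R ^ 2)) ∂ν := by
    conv_lhs => rw [← Measure.restrict_eq_self_of_ae_mem hmem]
    refine setLIntegral_congr_fun measurableSet_Ioi ?_
    intro ψ hψ
    have hψ0 : (0:ℝ) < ψ := hψ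
    have hrnn : (0:ℝ) ≤ (ψ / c) ^ α⁻¹ := Real.rpow_nonneg (by positivity) _
    have hAS : A ψ ∩ S = {x : Plane | R ≤ ‖x‖ ∧ ‖x‖ < (ψ / c) ^ α⁻¹} := by
      ext x
      have hiff : ‖x‖ < (ψ / c) ^ α⁻¹ ↔ c * ‖x‖ ^ α < ψ := by
        rw [Real.lt_rpow_inv_iff_of_pos (norm_nonneg x) (by positivity) hαpos,
          lt_div_iff₀ hcpos, mul_comm]
      simp only [hA, hS, mem_inter_iff, mem_setOf_eq, hiff]
      tauto
    beta_reduce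
    rw [hAS, plane_volume_annulus R _ hR hrnn]
    congr 1
    have hr2 : ((ψ / c) ^ α⁻¹) ^ 2 = (Q / y) ^ δ * ψ ^ δ := by
      rw [← Real.rpow_natCast ((ψ / c) ^ α⁻¹) 2,
        ← Real.rpow_mul (by positivity : (0:ℝ) ≤ ψ / c)]
      have he : α⁻¹ * ((2:ℕ):ℝ) = δ := by rw [hδ]; push_cast; field_simp
      rw [he]
      have hdiv : ψ / c = Q / y * ψ := by rw [hc]; field_simp
      rw [hdiv, Real.mul_rpow (by positivity) hψ0.le]
    rw [hr2]
  rw [step4]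
  -- Step 5: split the domain; the part below u contributes 0
  have hsplit : Set.Ioc (0:ℝ) u ∪ Set.Ioi u = Set.Ioi 0 := Set.Ioc_union_Ioi_eq_Ioi hupos
  rw [← hsplit, lintegral_union measurableSet_Ioi (Set.Ioc_disjoint_Ioi le_rfl)]
  have hzero : ∫⁻ ψ in Set.Ioc (0:ℝ) u,
      ENNReal.ofReal (π * ((Q / y) ^ δ * ψ ^ δ - R ^ 2)) ∂ν = 0 := by
    have hz : ∀ ψ ∈ Set.Ioc (0:ℝ) u,
        ENNReal.ofReal (π * ((Q / y) ^ δ * ψ ^ δ - R ^ 2)) = 0 := by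
      intro ψ hψ
      rw [ENNReal.ofReal_eq_zero]
      have h1 : (Q / y) ^ δ * ψ ^ δ = (Q / y * ψ) ^ δ :=
        (Real.mul_rpow (by positivity) hψ.1.le).symm
      have h2 : Q / y * ψ ≤ R ^ α := by
        have := mul_le_mul_of_nonneg_left hψ.2 (le_of_lt (by positivity : (0:ℝ) < Q / y))
        calc Q / y * ψ ≤ Q / y * u := this
          _ = Q / y * c * R ^ α := by rw [hu]; ring
          _ = R ^ α := by rw [hQy, one_mul]
      have h3 : (Q / y * ψ) ^ δ ≤ (R ^ α) ^ δ :=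
        Real.rpow_le_rpow (mul_nonneg (by positivity) hψ.1.le) h2 hδpos.le
      rw [h2R] at h3
      rw [h1]
      nlinarith [Real.pi_pos]
    calc ∫⁻ ψ in Set.Ioc (0:ℝ) u,
        ENNReal.ofReal (π * ((Q / y) ^ δ * ψ ^ δ - R ^ 2)) ∂ν
        = ∫⁻ _ in Set.Ioc (0:ℝ) u, 0 ∂ν :=
          setLIntegral_congr_fun measurableSet_Ioc hz
      _ = 0 := lintegral_zero
  rw [hzero, zero_add]
  -- Step 6: convert back to a Bochner integral
  have hae : 0 ≤ᵐ[ν.restrict (Set.Ioi u)]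
      fun ψ => π * ((Q / y) ^ δ * ψ ^ δ - R ^ 2) := by
    filter_upwards [ae_restrict_mem measurableSet_Ioi] with ψ hψ
    have hψ0 : (0:ℝ) < ψ := lt_of_le_of_lt hupos hψ
    have h2 : R ^ α ≤ Q / y * ψ := by
      have := mul_le_mul_of_nonneg_left (le_of_lt hψ)
        (le_of_lt (by positivity : (0:ℝ) < Q / y))
      calc R ^ α = Q / y * c * R ^ α := by rw [hQy, one_mul]
        _ = Q / y * u := by rw [hu]; ring
        _ ≤ Q / y * ψ := this
    have h3 : (R ^ α) ^ δ ≤ (Q / y * ψ) ^ δ :=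
      Real.rpow_le_rpow (Real.rpow_nonneg hR α) h2 hδpos.le
    rw [h2R, Real.mul_rpow (by positivity) hψ0.le] at h3
    have : (0:ℝ) ≤ (Q / y) ^ δ * ψ ^ δ - R ^ 2 := by linarith
    positivity
  have hF : Integrable (fun ψ => π * ((Q / y) ^ δ * ψ ^ δ - R ^ 2))
      (ν.restrict (Set.Ioi u)) := by
    have h2 : (fun ψ : ℝ => π * ((Q / y) ^ δ * ψ ^ δ - R ^ 2))
        = fun ψ => (π * (Q / y) ^ δ) * ψ ^ δ - π * R ^ 2 := by funext ψ; ring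
    rw [h2]
    exact (hint.restrict.const_mul _).sub (integrable_const _)
  rw [← ofReal_integral_eq_lintegral_ofReal hF hae,
    ENNReal.toReal_ofReal (integral_nonneg_of_ae hae)]
  -- Step 7: algebra
  have h7 : ∫ ψ in Set.Ioi u, π * ((Q / y) ^ δ * ψ ^ δ - R ^ 2) ∂ν
      = ∫ ψ in Set.Ioi u, ((π * (Q / y) ^ δ) * ψ ^ δ - π * R ^ 2) ∂ν :=
    integral_congr_ae (Filter.Eventually.of_forall fun ψ => by ring)
  rw [h7, integral_sub (hint.restrict.const_mul _) (integrable_const _),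
    integral_const_mul, integral_const, measureReal_restrict_apply_univ, measureReal_def, smul_eq_mul]
  ring
end
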